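/- Sturm comparison for Prüfer phase angles: let a, b : [0,1] → ℝ be continuous with a(t) ≤ b(t) for all t, and let θ_a, θ_b : [0,1] → ℝ be the continuous phase angles of the solutions of u'' + a u = 0 and u'' + b u = 0 with u(0)=0, u'(0)=1, i.e., θ_c(t) is the continuous argument of u'(t) + i u(t) with θ_c(0) = 0. Then θ_a(1) ≤ θ_b(1). -/

import Mathlib

open Real Set Complex

/-- Energy nonvanishing: a nontrivial solution of `u'' + c u = 0` has `φ² + φ'² ≠ 0` on `[0,1]`. -/
lemma sturm_energy_pos (c φ : ℝ → ℝ) (hc : Continuous c) (hφ : ContDiff ℝ 2 φ)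
    (hode : ∀ t ∈ Icc (0:ℝ) 1, deriv (deriv φ) t + c t * φ t = 0)
    (h0 : φ 0 = 0) (h0' : deriv φ 0 = 1) :
    ∀ t ∈ Icc (0:ℝ) 1, (φ t)^2 + (deriv φ t)^2 ≠ 0 := by
  have hφ2 : ContDiff ℝ ((1:WithTop ℕ∞) + 1) φ := by norm_num; exact hφ
  have hφ' : ContDiff ℝ 1 (deriv φ) := (contDiff_succ_iff_deriv.mp hφ2).2.2
  have hdφ : Differentiable ℝ φ := (contDiff_succ_iff_deriv.mp hφ2).1
  have hdφ' : Differentiable ℝ (deriv φ) := hφ'.differentiable one_ne_zero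
  set E : ℝ → ℝ := fun t => (φ t)^2 + (deriv φ t)^2 with hE
  have hE' : ∀ t, HasDerivAt E (2 * φ t * deriv φ t + 2 * deriv φ t * deriv (deriv φ) t) t := by
    intro t
    have h1 : HasDerivAt (fun s => (φ s)^2) (2 * φ t * deriv φ t) t := by
      simpa [mul_comm] using ((hdφ t).hasDerivAt.fun_pow 2)
    have h2 : HasDerivAt (fun s => (deriv φ s)^2) (2 * deriv φ t * deriv (deriv φ) t) t := by
      simpa [mul_comm] using ((hdφ' t).hasDerivAt.fun_pow 2)
    exact h1.add h2
  -- bound on |1 - c|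
  obtain ⟨K0, hK0⟩ : ∃ K0, ∀ t ∈ Icc (0:ℝ) 1, |1 - c t| ≤ K0 := by
    obtain ⟨K0, hK0⟩ := (isCompact_Icc.image ((continuous_const.sub hc).abs)).isBounded.subset_ball 0
    exact ⟨K0, fun t ht => by
      have := hK0 (mem_image_of_mem _ ht)
      simpa [Real.norm_eq_abs, abs_abs] using (mem_ball_zero_iff.mp this).le⟩
  set K := max K0 1 with hK
  have hKpos : (0:ℝ) < K := lt_of_lt_of_le one_pos (le_max_right _ _)
  have hbound : ∀ t ∈ Icc (0:ℝ) 1,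
      |2 * φ t * deriv φ t + 2 * deriv φ t * deriv (deriv φ) t| ≤ K * E t := by
    intro t ht
    have hode' : deriv (deriv φ) t = -(c t * φ t) := by linarith [hode t ht]
    have h1 : 2 * φ t * deriv φ t + 2 * deriv φ t * deriv (deriv φ) t
        = (1 - c t) * (2 * φ t * deriv φ t) := by rw [hode']; ring
    rw [h1, abs_mul]
    have h2 : |2 * φ t * deriv φ t| ≤ E t := by
      have hadd := sq_nonneg (φ t + deriv φ t)
      have hsub := sq_nonneg (φ t - deriv φ t)
      simp only [hE]
      rw [abs_le]
      constructor <;> nlinarith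
    have h3 : |1 - c t| ≤ K := le_trans (hK0 t ht) (le_max_left _ _)
    have hEnn : 0 ≤ E t := by positivity
    exact mul_le_mul h3 h2 (abs_nonneg _) hKpos.le
  -- if E vanishes at t0 ∈ [0,1], backward Gronwall gives E 0 = 0, contradiction
  intro t0 ht0 hE0
  set F : ℝ → ℝ := fun s => E (t0 - s) with hF
  have hF' : ∀ s, HasDerivAt F
      (-(2 * φ (t0-s) * deriv φ (t0-s) + 2 * deriv φ (t0-s) * deriv (deriv φ) (t0-s))) s := by
    intro s
    have : HasDerivAt (fun s : ℝ => t0 - s) (-1) s := (hasDerivAt_id s).const_sub t0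
    exact ((hE' (t0 - s)).comp s this).congr_deriv (by ring)
  have key : ∀ s ∈ Icc (0:ℝ) t0, ‖F s‖ ≤ gronwallBound 0 K 0 (s - 0) := by
    apply norm_le_gronwallBound_of_norm_deriv_right_le
    · have hEc : Continuous E := (hdφ.continuous.pow 2).add (hdφ'.continuous.pow 2)
      exact (hEc.comp (continuous_const.sub continuous_id)).continuousOn
    · exact fun s _ => (hF' s).hasDerivWithinAt
    · have hF0 : F 0 = 0 := by simp only [hF, sub_zero, hE]; exact hE0
      simp [hF0]
    · intro s hs
      have hmem : t0 - s ∈ Icc (0:ℝ) 1 := by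
        constructor
        · simp only [mem_Ico] at hs; linarith
        · simp only [mem_Ico] at hs; linarith [ht0.1, ht0.2]
      have := hbound (t0 - s) hmem
      have hEnn : 0 ≤ E (t0 - s) := by positivity
      simp only [Real.norm_eq_abs, abs_neg, hF]
      rw [_root_.abs_of_nonneg hEnn]
      linarith [this]
  have h1 : t0 ∈ Icc (0:ℝ) t0 := ⟨ht0.1, le_refl _⟩
  have := key t0 h1
  rw [gronwallBound_ε0_δ0] at this
  have hF1 : F t0 = E 0 := by simp [hF]
  have : E 0 ≤ 0 := by
    rw [← hF1]; exact le_trans (le_abs_self _) (by simpa using this)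
  have : E 0 = 1 := by simp [hE, h0, h0']
  linarith

/-- Prüfer phase derivative. -/
lemma sturm_phase_deriv (c φ θ : ℝ → ℝ) (hc : Continuous c) (hφ : ContDiff ℝ 2 φ)
    (hode : ∀ t ∈ Icc (0:ℝ) 1, deriv (deriv φ) t + c t * φ t = 0)
    (h0 : φ 0 = 0) (h0' : deriv φ 0 = 1)
    (hθ : Continuous θ) (hθ0 : θ 0 = 0)
    (harg : ∀ t ∈ Icc (0:ℝ) 1,
      ((Complex.ofReal (deriv φ t)) + Complex.I * (φ t : ℂ)) =
        (‖(Complex.ofReal (deriv φ t)) + Complex.I * (φ t : ℂ)‖ : ℂ) *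
          Complex.exp (Complex.I * (θ t : ℂ))) :
    ∀ t ∈ Ico (0:ℝ) 1, HasDerivWithinAt θ
      (Real.cos (θ t)^2 + c t * Real.sin (θ t)^2) (Ici t) t := by
  have hφ2 : ContDiff ℝ ((1:WithTop ℕ∞) + 1) φ := by norm_num; exact hφ
  have hφ' : ContDiff ℝ 1 (deriv φ) := (contDiff_succ_iff_deriv.mp hφ2).2.2
  have hdφ : Differentiable ℝ φ := (contDiff_succ_iff_deriv.mp hφ2).1
  have hdφ' : Differentiable ℝ (deriv φ) := hφ'.differentiable one_ne_zero
  have hφ'' : Continuous (deriv (deriv φ)) := by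
    have h1 : ContDiff ℝ ((0:WithTop ℕ∞) + 1) (deriv φ) := by norm_num; exact hφ'
    exact ((contDiff_succ_iff_deriv.mp h1).2.2).continuous
  set z : ℝ → ℂ := fun t => (Complex.ofReal (deriv φ t)) + Complex.I * (φ t : ℂ) with hzdef
  set z' : ℝ → ℂ := fun t => (Complex.ofReal (deriv (deriv φ) t)) + Complex.I * Complex.ofReal (deriv φ t)
    with hz'def
  have hz : ∀ t, HasDerivAt z (z' t) t := by
    intro t
    exact ((hdφ' t).hasDerivAt.ofReal_comp).add (((hdφ t).hasDerivAt.ofReal_comp).const_mul I)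
  have hzc : Continuous z := by
    exact (Complex.continuous_ofReal.comp hdφ'.continuous).add
      (continuous_const.mul (Complex.continuous_ofReal.comp hdφ.continuous))
  have hz'c : Continuous z' := by
    exact (Complex.continuous_ofReal.comp hφ'').add
      (continuous_const.mul (Complex.continuous_ofReal.comp hdφ'.continuous))
  have hnz : ∀ t ∈ Icc (0:ℝ) 1, z t ≠ 0 := by
    intro t ht h
    have h1 : deriv φ t = 0 ∧ φ t = 0 := by
      have hre := congrArg Complex.re h
      have him := congrArg Complex.im h
      simp [hzdef] at hre him
      exact ⟨hre, him⟩
    exact sturm_energy_pos c φ hc hφ hode h0 h0' t ht (by rw [h1.1, h1.2]; ring)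
  -- projection to [0,1]
  set p : ℝ → ℝ := fun t => max 0 (min t 1) with hpdef
  have hpc : Continuous p := continuous_const.max (continuous_id.min continuous_const)
  have hpm : ∀ t, p t ∈ Icc (0:ℝ) 1 := fun t =>
    ⟨le_max_left _ _, max_le (by norm_num) (min_le_right _ _)⟩
  have hpe : ∀ t ∈ Icc (0:ℝ) 1, p t = t := by
    intro t ht
    simp only [hpdef]
    rw [min_eq_left ht.2, max_eq_right ht.1]
  set Ψ : ℝ → ℂ := fun t => z' (p t) / z (p t) with hΨdef
  have hΨc : Continuous Ψ := by
    exact (hz'c.comp hpc).div (hzc.comp hpc) (fun t => hnz (p t) (hpm t))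
  set M : ℝ → ℂ := fun t => ∫ s in (0:ℝ)..t, Ψ s with hMdef
  have hM : ∀ t, HasDerivAt M (Ψ t) t := fun t => (hΨc.integral_hasStrictDerivAt 0 t).hasDerivAt
  have hM0 : M 0 = 0 := intervalIntegral.integral_same
  have hMc : Continuous M := by
    exact continuous_iff_continuousAt.mpr fun t => (hM t).continuousAt
  -- z = exp M on [0,1]
  have hzexp : ∀ t ∈ Icc (0:ℝ) 1, z t = Complex.exp (M t) := by
    have hconst : ∀ t ∈ Icc (0:ℝ) 1, z t * Complex.exp (-M t) = z 0 * Complex.exp (-M 0) := by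
      apply constant_of_has_deriv_right_zero
      · exact (hzc.mul (hMc.neg.cexp)).continuousOn
      · intro x hx
        have hd : HasDerivAt (fun t => z t * Complex.exp (-M t))
            (z' x * Complex.exp (-M x) + z x * (Complex.exp (-M x) * -Ψ x)) x :=
          (hz x).mul ((hM x).neg.cexp)
        have hval : z' x * Complex.exp (-M x) + z x * (Complex.exp (-M x) * -Ψ x) = 0 := by
          have hx1 : x ∈ Icc (0:ℝ) 1 := Ico_subset_Icc_self hx
          have : z x * Ψ x = z' x := by
            simp only [hΨdef, hpe x hx1]
            field_simp [hnz x hx1]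
          rw [mul_comm (Complex.exp (-M x)) (-Ψ x), ← mul_assoc, mul_neg, this]
          ring
        rw [hval] at hd
        exact hd.hasDerivWithinAt
    intro t ht
    have := hconst t ht
    have hz0 : z 0 = 1 := by simp [hzdef, h0, h0']
    rw [hz0, hM0, neg_zero, Complex.exp_zero, one_mul] at this
    have hne := Complex.exp_ne_zero (-M t)
    calc z t = z t * Complex.exp (-M t) * Complex.exp (M t) := by
          rw [mul_assoc, ← Complex.exp_add]; simp
      _ = Complex.exp (M t) := by rw [this, one_mul]
  -- θ t = (M t).im on [0,1]
  have habs : ∀ t ∈ Icc (0:ℝ) 1, (‖z t‖ : ℝ) = Real.exp ((M t).re) := by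
    intro t ht
    rw [hzexp t ht, Complex.norm_exp]
  have hdia : ∀ t ∈ Icc (0:ℝ) 1, ∃ n : ℤ, θ t - (M t).im = 2 * π * n := by
    intro t ht
    have h1 : Complex.exp (M t) = Complex.exp (((M t).re : ℂ) + Complex.I * (θ t : ℂ)) := by
      rw [← hzexp t ht]
      calc z t = (‖z t‖ : ℂ) * Complex.exp (Complex.I * (θ t : ℂ)) := harg t ht
        _ = Complex.exp (((M t).re : ℂ)) * Complex.exp (Complex.I * (θ t : ℂ)) := by
            rw [show ((‖z t‖ : ℝ) : ℂ) = ((Real.exp ((M t).re) : ℝ) : ℂ) by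
              exact_mod_cast congrArg Complex.ofReal (habs t ht)]
            rw [Complex.ofReal_exp]
        _ = Complex.exp (((M t).re : ℂ) + Complex.I * (θ t : ℂ)) := (Complex.exp_add _ _).symm
    obtain ⟨n, hn⟩ := Complex.exp_eq_exp_iff_exists_int.mp h1
    refine ⟨-n, ?_⟩
    have := congrArg Complex.im hn
    simp at this
    push_cast
    linarith [this]
  have hθeq : ∀ t ∈ Icc (0:ℝ) 1, θ t = (M t).im := by
    have hdc : Continuous (fun u => θ u - (M u).im) :=
      hθ.sub (Complex.continuous_im.comp hMc)
    have hd0 : θ 0 - (M 0).im = 0 := by simp [hθ0, hM0]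
    have hπ : (0:ℝ) < π := Real.pi_pos
    intro t ht
    by_contra hne
    obtain ⟨n, hn⟩ := hdia t ht
    have hn0 : n ≠ 0 := by
      intro h; rw [h] at hn; simp at hn
      exact hne (by linarith)
    have key : ∃ s ∈ Icc (0:ℝ) t, θ s - (M s).im = π ∨ θ s - (M s).im = -π := by
      rcases lt_or_gt_of_ne hn0 with hneg | hpos
      · have hcast : (n:ℝ) ≤ -1 := by exact_mod_cast (by omega : n ≤ -1)
        have hdt : θ t - (M t).im ≤ -(2*π) := by rw [hn]; nlinarith
        have hsub := intermediate_value_Icc' ht.1 (hdc.continuousOn (s := Icc 0 t))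
        have hmem : -π ∈ Icc (θ t - (M t).im) (θ 0 - (M 0).im) := by
          constructor
          · linarith
          · rw [hd0]; linarith
        obtain ⟨s, hs, hds⟩ := hsub hmem
        exact ⟨s, hs, Or.inr hds⟩
      · have hcast : (1:ℝ) ≤ (n:ℝ) := by exact_mod_cast hpos
        have hdt : 2*π ≤ θ t - (M t).im := by rw [hn]; nlinarith
        have hsub := intermediate_value_Icc ht.1 (hdc.continuousOn (s := Icc 0 t))
        have hmem : π ∈ Icc (θ 0 - (M 0).im) (θ t - (M t).im) := by
          constructor
          · rw [hd0]; linarith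
          · linarith
        obtain ⟨s, hs, hds⟩ := hsub hmem
        exact ⟨s, hs, Or.inl hds⟩
    obtain ⟨s, hs, hds⟩ := key
    have hsI : s ∈ Icc (0:ℝ) 1 := ⟨hs.1, le_trans hs.2 ht.2⟩
    obtain ⟨m, hm⟩ := hdia s hsI
    have hπ0 : π ≠ 0 := Real.pi_ne_zero
    rcases hds with h | h
    · rw [h] at hm
      have h2 : (2*(m:ℝ) - 1) * π = 0 := by linear_combination -hm
      rcases mul_eq_zero.mp h2 with h3 | h3
      · have : (2*m : ℤ) = 1 := by exact_mod_cast (by linarith : (2*(m:ℝ)) = 1)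
        omega
      · exact hπ0 h3
    · rw [h] at hm
      have h2 : (2*(m:ℝ) + 1) * π = 0 := by linear_combination -hm
      rcases mul_eq_zero.mp h2 with h3 | h3
      · have : (2*m : ℤ) = -1 := by exact_mod_cast (by linarith : (2*(m:ℝ)) = -1)
        omega
      · exact hπ0 h3
  -- final derivative computation
  intro t ht
  have htI : t ∈ Icc (0:ℝ) 1 := Ico_subset_Icc_self ht
  have hMim : HasDerivAt (fun s => (M s).im) ((Ψ t).im) t := by
    have := (Complex.imCLM.hasFDerivAt (x := M t)).comp_hasDerivAt t (hM t)
    exact this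
  -- value of (Ψ t).im
  set r : ℝ := ‖z t‖ with hrdef
  have hrpos : 0 < r := by
    rw [hrdef]
    exact norm_pos_iff.mpr (hnz t htI)
  have hre : deriv φ t = r * Real.cos (θ t) := by
    have := congrArg Complex.re (harg t htI)
    simpa [hzdef, mul_comm Complex.I ((θ t : ℝ) : ℂ), Complex.exp_ofReal_mul_I_re,
      Complex.exp_ofReal_mul_I_im] using this
  have him : φ t = r * Real.sin (θ t) := by
    have := congrArg Complex.im (harg t htI)
    simpa [hzdef, mul_comm Complex.I ((θ t : ℝ) : ℂ), Complex.exp_ofReal_mul_I_re,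
      Complex.exp_ofReal_mul_I_im] using this
  have hode' : deriv (deriv φ) t = -(c t * φ t) := by linarith [hode t htI]
  have hval : (Ψ t).im = Real.cos (θ t)^2 + c t * Real.sin (θ t)^2 := by
    have hnorm : Complex.normSq (z t) = r^2 := by
      rw [hrdef, Complex.sq_norm]
    have h1 : (Ψ t).im = (deriv φ t * deriv φ t + (c t * φ t) * φ t) / r^2 := by
      simp only [hΨdef, hpe t htI, Complex.div_im, hnorm]
      simp [hzdef, hz'def, hode']
      ring
    rw [h1, hre, him]
    field_simp
  have hθd : HasDerivWithinAt θ (Real.cos (θ t)^2 + c t * Real.sin (θ t)^2) (Icc 0 1) t := by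
    rw [← hval]
    exact (hMim.hasDerivWithinAt.congr (fun s hs => (hθeq s hs)) (hθeq t htI))
  apply hθd.mono_of_mem_nhdsWithin
  have h1 : Ici t ∩ Iio 1 ∈ nhdsWithin t (Ici t) :=
    inter_mem_nhdsWithin (Ici t) (Iio_mem_nhds ht.2)
  apply Filter.mem_of_superset h1
  intro x hx
  exact ⟨le_trans ht.1 hx.1, le_of_lt hx.2⟩

lemma sturm_cos_sq_lipschitz (x y : ℝ) : |Real.cos x ^ 2 - Real.cos y ^ 2| ≤ |x - y| := by
  have h1 : Real.cos x ^ 2 - Real.cos y ^ 2 = -(Real.sin (x+y) * Real.sin (x-y)) := by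
    rw [Real.cos_sq, Real.cos_sq]
    have h2 : Real.cos (2*x) - Real.cos (2*y)
        = -2 * Real.sin ((2*x+2*y)/2) * Real.sin ((2*x-2*y)/2) := Real.cos_sub_cos _ _
    have h3 : (2*x+2*y)/2 = x + y := by ring
    have h4 : (2*x-2*y)/2 = x - y := by ring
    rw [h3, h4] at h2
    linarith
  rw [h1, abs_neg, abs_mul]
  calc |Real.sin (x+y)| * |Real.sin (x-y)| ≤ 1 * |x - y| := by
        apply mul_le_mul (Real.abs_sin_le_one _)
          Real.abs_sin_le_abs (abs_nonneg _) zero_le_one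
    _ = |x - y| := one_mul _

/-- Sturm comparison for Prüfer phase angles: if `a ≤ b` on `[0,1]`, `φ_a, φ_b` are the
solutions of `u'' + a u = 0`, `u'' + b u = 0` with `u(0)=0`, `u'(0)=1`, and `θ_a, θ_b`
are the continuous arguments of `φ'(t) + i φ(t)` normalized by `θ(0)=0`, then
`θ_a(1) ≤ θ_b(1)`. -/
theorem sturm_phase_comparison (a b : ℝ → ℝ) (ha : Continuous a) (hb : Continuous b)
    (hab : ∀ t ∈ Icc (0:ℝ) 1, a t ≤ b t)
    (φa φb θa θb : ℝ → ℝ)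
    (hφa : ContDiff ℝ 2 φa) (hφb : ContDiff ℝ 2 φb)
    (hodea : ∀ t ∈ Icc (0:ℝ) 1, deriv (deriv φa) t + a t * φa t = 0)
    (hodeb : ∀ t ∈ Icc (0:ℝ) 1, deriv (deriv φb) t + b t * φb t = 0)
    (hφa0 : φa 0 = 0) (hφa0' : deriv φa 0 = 1)
    (hφb0 : φb 0 = 0) (hφb0' : deriv φb 0 = 1)
    (hθa : Continuous θa) (hθb : Continuous θb) (hθa0 : θa 0 = 0) (hθb0 : θb 0 = 0)
    (harga : ∀ t ∈ Icc (0:ℝ) 1,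
      ((Complex.ofReal (deriv φa t)) + Complex.I * (φa t : ℂ)) =
        (‖(Complex.ofReal (deriv φa t)) + Complex.I * (φa t : ℂ)‖ : ℂ) *
          Complex.exp (Complex.I * (θa t : ℂ)))
    (hargb : ∀ t ∈ Icc (0:ℝ) 1,
      ((Complex.ofReal (deriv φb t)) + Complex.I * (φb t : ℂ)) =
        (‖(Complex.ofReal (deriv φb t)) + Complex.I * (φb t : ℂ)‖ : ℂ) *
          Complex.exp (Complex.I * (θb t : ℂ))) :
    θa 1 ≤ θb 1 := by
  have hDa := sturm_phase_deriv a φa θa ha hφa hodea hφa0 hφa0' hθa hθa0 harga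
  have hDb := sturm_phase_deriv b φb θb hb hφb hodeb hφb0 hφb0' hθb hθb0 hargb
  obtain ⟨K0, hK0⟩ : ∃ K0, ∀ t ∈ Icc (0:ℝ) 1, |1 - a t| ≤ K0 := by
    obtain ⟨K0, hK0⟩ := (isCompact_Icc.image ((continuous_const.sub ha).abs)).isBounded.subset_ball 0
    exact ⟨K0, fun t ht => by
      have := hK0 (mem_image_of_mem _ ht)
      simpa [Real.norm_eq_abs, abs_abs] using (mem_ball_zero_iff.mp this).le⟩
  set K := max K0 1 with hKdef
  have hKpos : (0:ℝ) < K := lt_of_lt_of_le one_pos (le_max_right _ _)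
  set f : ℝ → ℝ := fun t => θa t - θb t with hfdef
  set f' : ℝ → ℝ := fun t => (Real.cos (θa t)^2 + a t * Real.sin (θa t)^2)
    - (Real.cos (θb t)^2 + b t * Real.sin (θb t)^2) with hf'def
  have hfd : ∀ t ∈ Ico (0:ℝ) 1, HasDerivWithinAt f (f' t) (Ici t) t :=
    fun t ht => (hDa t ht).sub (hDb t ht)
  have key : ∀ ε > (0:ℝ), f 1 ≤ gronwallBound 0 K ε 1 := by
    intro ε hε
    have hBnn : ∀ x ∈ Icc (0:ℝ) 1, 0 ≤ gronwallBound 0 K ε (x - 0) := by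
      intro x hx
      rw [gronwallBound_of_K_ne_0 (ne_of_gt hKpos)]
      simp only [zero_mul, zero_add]
      have h1 : (1:ℝ) ≤ Real.exp (K * (x - 0)) := by
        rw [← Real.exp_zero]
        apply Real.exp_le_exp.mpr
        have hx0 := hx.1
        have : (0:ℝ) ≤ x - 0 := by linarith
        exact mul_nonneg hKpos.le this
      have h2 : 0 ≤ ε / K := by positivity
      nlinarith
    have := image_le_of_liminf_slope_right_lt_deriv_boundary
      (f := f) (f' := f') (a := 0) (b := 1)
      ((hθa.sub hθb).continuousOn)
      (fun x hx r hr => (hfd x hx).liminf_right_slope_le hr)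
      (B := fun x => gronwallBound 0 K ε (x - 0))
      (B' := fun x => K * gronwallBound 0 K ε (x - 0) + ε)
      (by simp [hfdef, hθa0, hθb0, gronwallBound_x0])
      (fun x => hasDerivAt_gronwallBound_shift 0 K ε x 0)
      ?_ (right_mem_Icc.mpr zero_le_one)
    · simpa using this
    · intro x hx hfB
      have hxI : x ∈ Icc (0:ℝ) 1 := Ico_subset_Icc_self hx
      have hfxnn : 0 ≤ f x := hfB ▸ hBnn x hxI
      have hsplit : f' x = (1 - a x) * (Real.cos (θa x)^2 - Real.cos (θb x)^2)
          + (a x - b x) * Real.sin (θb x)^2 := by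
        simp only [hf'def]
        rw [Real.sin_sq (θa x), Real.sin_sq (θb x)]
        ring
      have h1 : (1 - a x) * (Real.cos (θa x)^2 - Real.cos (θb x)^2) ≤ K * f x := by
        calc (1 - a x) * (Real.cos (θa x)^2 - Real.cos (θb x)^2)
            ≤ |1 - a x| * |Real.cos (θa x)^2 - Real.cos (θb x)^2| := by
              rw [← abs_mul]; exact le_abs_self _
          _ ≤ K * |θa x - θb x| := by
              apply mul_le_mul (le_trans (hK0 x hxI) (le_max_left _ _))
                (sturm_cos_sq_lipschitz _ _) (abs_nonneg _) hKpos.le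
          _ = K * f x := by rw [show |θa x - θb x| = f x from abs_of_nonneg hfxnn]
      have h2 : (a x - b x) * Real.sin (θb x)^2 ≤ 0 :=
        mul_nonpos_of_nonpos_of_nonneg (by linarith [hab x hxI]) (sq_nonneg _)
      calc f' x = (1 - a x) * (Real.cos (θa x)^2 - Real.cos (θb x)^2)
            + (a x - b x) * Real.sin (θb x)^2 := hsplit
        _ ≤ K * f x + 0 := add_le_add h1 h2
        _ = K * gronwallBound 0 K ε (x - 0) + 0 := by rw [hfB]
        _ < K * gronwallBound 0 K ε (x - 0) + ε := by linarith
  -- take ε → 0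
  have hgbval : ∀ ε : ℝ, gronwallBound 0 K ε 1 = ε * ((Real.exp K - 1)/K) := by
    intro ε
    rw [gronwallBound_of_K_ne_0 (ne_of_gt hKpos)]
    simp only [zero_mul, zero_add, mul_one]
    field_simp
  have hC : 0 < (Real.exp K - 1)/K := by
    apply div_pos _ hKpos
    have : (1:ℝ) < Real.exp K := by
      rw [← Real.exp_zero]; exact Real.exp_lt_exp.mpr hKpos
    linarith
  have hf1 : f 1 ≤ 0 := by
    by_contra h
    push_neg at h
    generalize hd : f 1 = d at h key
    set C : ℝ := (Real.exp K - 1)/K with hCdef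
    have hCne : C ≠ 0 := ne_of_gt hC
    have hstep := key (d / (2*C)) (by positivity)
    rw [hgbval] at hstep
    have h3 : d / (2*C) * C = d/2 := by
      field_simp
    rw [h3] at hstep
    linarith
  simpa [hfdef] using sub_nonpos.mp hf1
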